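/- Let ω : ℂ → [0,∞) be measurable with ∫_ℂ |z|^m ω(z) dA(z) < ∞ for every m ∈ ℕ, and let (p_k)_{k≥0} be monic polynomials with real coefficients, deg p_k = k, satisfying ∫_ℂ p_j(z)·conj(p_k(z))·ω(z) dA(z) = h_k·δ_{jk} with h_k > 0 and a three-term recurrence z·p_k(z) = p_{k+1}(z) + b_k·p_k(z) + c_k·p_{k−1}(z) (p_{−1} := 0). Define A(p,j,k) by z^p·p_k(z) = Σ_{j=0}^{k+p} A(p,j,k)·p_j(z). Assume h_{2l+1} − c_{2l+1}·h_{2l} ≠ 0 for all l, set λ_l := (h_{2l+2} − c_{2l+2}·h_{2l+1})/(h_{2l+1} − c_{2l+1}·h_{2l}), μ(k,j) := Π_{l=j}^{k−1} λ_l, r_k := 2·(h_{2k+1} − c_{2k+1}·h_{2k}), and define q_{2k+1}(z) := p_{2k+1}(z), q_{2k}(z) := Σ_{j=0}^{k} μ(k,j)·p_{2j}(z). Assume the q's are skew-orthogonal with respect to ⟨f,g⟩_s := ∫_ℂ (f(z)·conj(g(z)) − g(z)·conj(f(z)))·(conj(z) − z)·ω(z) dA(z), i.e. ⟨q_{2j},q_{2k}⟩_s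 = ⟨q_{2j+1},q_{2k+1}⟩_s = 0 and ⟨q_{2j+1},q_{2k}⟩_s = r_k·δ_{jk}. Then for all N ≥ 1 and integers p ≥ 0: ∫_ℂ z^{p}·(conj(z) − z)·Σ_{k=0}^{N−1} (q_{2k+1}(z)·q_{2k}(conj(z)) − q_{2k}(z)·q_{2k+1}(conj(z)))/r_k · ω(z) dA(z) = (1/2)·Σ_{k=0}^{2N−1} A(p,k,k) − (1/2)·Σ_{j=0}^{N−1} μ(N,j)·A(p,2N,2j). -/

import Mathlib

/-!
For real polynomials `g(z̄) = conj (g z)`, so `⟨f, g⟩ = (1/π) ∫ f(z) g(z̄) ω dA` is a real bilinear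
pairing, and orthogonality of the basis `p` makes it symmetric. Moving the factor `z̄ - z` onto
either argument as multiplication by `X` gives `⟨f, g⟩_s = 2 (⟨f, X g⟩ - ⟨X f, g⟩)`, and the `k`-th
term of the moment integral becomes
`(⟨X^n q_{2k+1}, q_{2k}⟩_s - ⟨X^n q_{2k}, q_{2k+1}⟩_s) / (2 r_k)`.
Expanding `X^n p_j = ∑ A(n,i,j) p_i` and using `p_{2k+1} = q_{2k+1}`,
`p_{2k+2} = q_{2k+2} - λ_k q_{2k}`, skew-orthogonality leaves only the coefficients
`A(n,2k+1,2k+1)`, `A(n,2k,2j)` and `A(n,2k+2,2j)`, and the sum over `k` telescopes.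
-/

open Polynomial Finset MeasureTheory

/-- The skew-symmetric form `⟨f,g⟩_s = ∫_ℂ (f(z) conj(g(z)) - g(z) conj(f(z))) (conj z - z) ω(z) dA(z)`,
where `dA` is Lebesgue measure divided by `π`. -/
noncomputable def skewProd (ω : ℂ → ℝ) (f g : Polynomial ℝ) : ℂ :=
  (1 / (Real.pi : ℂ)) * ∫ z : ℂ,
    (Polynomial.aeval z f * (starRingEnd ℂ) (Polynomial.aeval z g)
      - Polynomial.aeval z g * (starRingEnd ℂ) (Polynomial.aeval z f)) *
    ((starRingEnd ℂ) z - z) * (ω z : ℂ)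

open ComplexConjugate

theorem LinearMap.flip_eq_self_of_span_range {R M N ι : Type*} [CommSemiring R]
    [AddCommMonoid M] [Module R M] [AddCommMonoid N] [Module R N] {B : M →ₗ[R] M →ₗ[R] N}
    {v : ι → M} (hv : Submodule.span R (Set.range v) = ⊤)
    (h : ∀ i j, B (v i) (v j) = B (v j) (v i)) : B.flip = B :=
  ext_on_range hv fun i => ext_on_range hv fun j => h j i

theorem Polynomial.span_range_eq_top_of_monic {R : Type*} [Ring R] [Nontrivial R]
    {p : ℕ → R[X]} (hmonic : ∀ k, (p k).Monic) (hdeg : ∀ k, (p k).natDegree = k) :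
    Submodule.span R (Set.range p) = ⊤ :=
  Sequence.span (S := ⟨p, fun k => by rw [degree_eq_natDegree (hmonic k).ne_zero, hdeg]⟩)
    fun k => by simp [(hmonic k).leadingCoeff]

theorem Polynomial.map_X_pow_mul_eq_sum {R M : Type*} [CommRing R] [AddCommMonoid M] [Module R M]
    (φ : R[X] →ₗ[R] M) {p : ℕ → R[X]} {A : ℕ → ℕ → ℕ → R}
    (hA : ∀ n k, X ^ n * p k = ∑ j ∈ range (k + n + 1), C (A n j k) * p j)
    (hA0 : ∀ n j k, k + n < j → A n j k = 0) {s : Finset ℕ} (hs : ∀ i ∉ s, φ (p i) = 0)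
    (n k : ℕ) : φ (X ^ n * p k) = ∑ i ∈ s, A n i k • φ (p i) := by
  simp only [hA, map_sum, C_mul', map_smul]
  calc ∑ i ∈ range (k + n + 1), A n i k • φ (p i)
      = ∑ i ∈ range (k + n + 1) ∪ s, A n i k • φ (p i) :=
        sum_subset subset_union_left fun i _ hi => by
          rw [hA0 n i k (by simpa using hi), zero_smul]
    _ = ∑ i ∈ s, A n i k • φ (p i) :=
        (sum_subset subset_union_right fun i _ hi => by rw [hs i hi, smul_zero]).symm

noncomputable def pairIntegrand (ω : ℂ → ℝ) (f g : ℝ[X]) (z : ℂ) : ℂ :=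
  aeval z f * aeval (conj z) g * (ω z : ℂ)

noncomputable def skewMomentIntegrand (ω : ℂ → ℝ) (n : ℕ) (f g : ℝ[X]) (z : ℂ) : ℂ :=
  z ^ n * (conj z - z) * (aeval z f * aeval (conj z) g - aeval z g * aeval (conj z) f) * (ω z : ℂ)

section Pairing

variable {ω : ℂ → ℝ}

theorem pairIntegrand_add_left (f₁ f₂ g : ℝ[X]) :
    pairIntegrand ω (f₁ + f₂) g = pairIntegrand ω f₁ g + pairIntegrand ω f₂ g := by
  ext z; simp [pairIntegrand, add_mul]

theorem pairIntegrand_add_right (f g₁ g₂ : ℝ[X]) :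
    pairIntegrand ω f (g₁ + g₂) = pairIntegrand ω f g₁ + pairIntegrand ω f g₂ := by
  ext z; simp [pairIntegrand, mul_add, add_mul]

theorem pairIntegrand_smul_left (a : ℝ) (f g : ℝ[X]) :
    pairIntegrand ω (a • f) g = a • pairIntegrand ω f g := by
  ext z; simp [pairIntegrand, Complex.real_smul, mul_assoc]

theorem pairIntegrand_smul_right (a : ℝ) (f g : ℝ[X]) :
    pairIntegrand ω f (a • g) = a • pairIntegrand ω f g := by
  ext z
  simp only [pairIntegrand, map_smul, Complex.real_smul, Pi.smul_apply]
  ring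

theorem skewMomentIntegrand_eq (n : ℕ) (f g : ℝ[X]) :
    skewMomentIntegrand ω n f g =
      pairIntegrand ω (X ^ n * f) (X * g) - pairIntegrand ω (X * (X ^ n * f)) g
        - pairIntegrand ω (X ^ n * g) (X * f) + pairIntegrand ω (X * (X ^ n * g)) f := by
  ext z
  simp only [skewMomentIntegrand, Pi.add_apply, Pi.sub_apply, pairIntegrand, map_mul, map_pow,
    aeval_X]
  ring

theorem skewProd_eq_integral_skewMomentIntegrand (f g : ℝ[X]) :
    skewProd ω f g = (1 / (Real.pi : ℂ)) * ∫ z, skewMomentIntegrand ω 0 f g z := by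
  unfold skewProd skewMomentIntegrand
  congr 2 with z
  simp only [aeval_conj, pow_zero, one_mul]
  ring

theorem skewProd_self (f : ℝ[X]) : skewProd ω f f = 0 := by
  simp [skewProd]

variable {ν : Measure ℂ} (hmom : ∀ m : ℕ, Integrable (fun z : ℂ => ‖z‖ ^ m * ω z) ν)
include hmom

theorem integrable_pairIntegrand (f g : ℝ[X]) : Integrable (pairIntegrand ω f g) ν := by
  have hω : AEStronglyMeasurable (fun z => (ω z : ℂ)) ν :=
    Complex.continuous_ofReal.comp_aestronglyMeasurable (by simpa using (hmom 0).1)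
  have hmonomial (m n : ℕ) : Integrable (fun z : ℂ => z ^ m * conj z ^ n * (ω z : ℂ)) ν :=
    (hmom (m + n)).mono (by fun_prop) (ae_of_all _ fun z => by simp [pow_add])
  induction f using Polynomial.induction_on' with
  | add f₁ f₂ h₁ h₂ => rw [pairIntegrand_add_left]; exact h₁.add h₂
  | monomial m a =>
    induction g using Polynomial.induction_on' with
    | add g₁ g₂ h₁ h₂ => rw [pairIntegrand_add_right]; exact h₁.add h₂
    | monomial n b =>
      convert (hmonomial m n).const_mul ((a : ℂ) * b) using 1
      ext z
      simp only [pairIntegrand, aeval_monomial, Complex.coe_algebraMap]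
      ring

theorem integrable_skewMomentIntegrand (n : ℕ) (f g : ℝ[X]) :
    Integrable (skewMomentIntegrand ω n f g) ν := by
  have := integrable_pairIntegrand hmom
  rw [skewMomentIntegrand_eq]
  exact (((this _ _).sub (this _ _)).sub (this _ _)).add (this _ _)

end Pairing

section PlanarPairing

variable {ω : ℂ → ℝ} (hmom : ∀ m : ℕ, Integrable (fun z : ℂ => ‖z‖ ^ m * ω z))
include hmom

noncomputable def planarPairing : ℝ[X] →ₗ[ℝ] ℝ[X] →ₗ[ℝ] ℂ :=
  LinearMap.mk₂ ℝ (fun f g => (1 / (Real.pi : ℂ)) * ∫ z, pairIntegrand ω f g z)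
    (fun _ _ _ => by
      rw [pairIntegrand_add_left, integral_add' (integrable_pairIntegrand hmom _ _)
        (integrable_pairIntegrand hmom _ _), mul_add])
    (fun _ _ _ => by rw [pairIntegrand_smul_left, Pi.smul_def, integral_smul, mul_smul_comm])
    (fun _ _ _ => by
      rw [pairIntegrand_add_right, integral_add' (integrable_pairIntegrand hmom _ _)
        (integrable_pairIntegrand hmom _ _), mul_add])
    (fun _ _ _ => by rw [pairIntegrand_smul_right, Pi.smul_def, integral_smul, mul_smul_comm])

theorem planarPairing_apply (f g : ℝ[X]) :
    planarPairing hmom f g = (1 / (Real.pi : ℂ)) * ∫ z, pairIntegrand ω f g z := rfl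

theorem integral_skewMomentIntegrand_eq_planarPairing (n : ℕ) (f g : ℝ[X]) :
    (1 / (Real.pi : ℂ)) * ∫ z, skewMomentIntegrand ω n f g z =
      planarPairing hmom (X ^ n * f) (X * g) - planarPairing hmom (X * (X ^ n * f)) g
        - planarPairing hmom (X ^ n * g) (X * f) + planarPairing hmom (X * (X ^ n * g)) f := by
  have := integrable_pairIntegrand hmom
  rw [skewMomentIntegrand_eq, integral_add' (((this _ _).sub (this _ _)).sub (this _ _)) (this _ _),
    integral_sub' ((this _ _).sub (this _ _)) (this _ _), integral_sub' (this _ _) (this _ _)]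
  simp only [planarPairing_apply]
  ring

theorem skewProd_eq_planarPairing (f g : ℝ[X]) :
    skewProd ω f g = planarPairing hmom f (X * g) - planarPairing hmom (X * f) g
      - planarPairing hmom g (X * f) + planarPairing hmom (X * g) f := by
  simpa using (skewProd_eq_integral_skewMomentIntegrand f g).trans
    (integral_skewMomentIntegrand_eq_planarPairing hmom 0 f g)

noncomputable def skewForm : ℝ[X] →ₗ[ℝ] ℝ[X] →ₗ[ℝ] ℂ :=
  LinearMap.mk₂ ℝ (skewProd ω)
    (fun _ _ _ => by
      simp only [skewProd_eq_planarPairing hmom, mul_add, map_add, LinearMap.add_apply]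
      ring)
    (fun _ _ _ => by simp only [skewProd_eq_planarPairing hmom, mul_smul_comm, map_smul,
      LinearMap.smul_apply, smul_sub, smul_add])
    (fun _ _ _ => by
      simp only [skewProd_eq_planarPairing hmom, mul_add, map_add, LinearMap.add_apply]
      ring)
    (fun _ _ _ => by simp only [skewProd_eq_planarPairing hmom, mul_smul_comm, map_smul,
      LinearMap.smul_apply, smul_sub, smul_add])

theorem skewForm_isAlt : (skewForm hmom).IsAlt := skewProd_self

theorem planarPairing_eq_integral_mul_conj (f g : ℝ[X]) :
    planarPairing hmom f g =
      (1 / (Real.pi : ℂ)) * ∫ z, aeval z f * conj (aeval z g) * (ω z : ℂ) := by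
  simp only [planarPairing_apply, pairIntegrand, aeval_conj]

section Symmetric

variable (hsymm : ∀ f g : ℝ[X], planarPairing hmom f g = planarPairing hmom g f)
include hsymm

theorem skewProd_eq_two_mul (f g : ℝ[X]) :
    skewProd ω f g = 2 * (planarPairing hmom f (X * g) - planarPairing hmom (X * f) g) := by
  rw [skewProd_eq_planarPairing hmom, hsymm g, hsymm (X * g)]
  ring

theorem integral_skewMomentIntegrand (n : ℕ) (f g : ℝ[X]) :
    (1 / (Real.pi : ℂ)) * ∫ z, skewMomentIntegrand ω n f g z =
      (skewProd ω (X ^ n * f) g - skewProd ω (X ^ n * g) f) / 2 := by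
  rw [integral_skewMomentIntegrand_eq_planarPairing hmom, skewProd_eq_two_mul hmom hsymm,
    skewProd_eq_two_mul hmom hsymm]
  ring

end Symmetric

end PlanarPairing

noncomputable def symplecticMoment (A : ℕ → ℕ → ℕ → ℝ) (μ : ℕ → ℕ → ℝ) (n N : ℕ) : ℝ :=
  (∑ k ∈ range (2 * N), A n k k - ∑ j ∈ range N, μ N j * A n (2 * N) (2 * j)) / 2

theorem symplecticMoment_zero (A : ℕ → ℕ → ℕ → ℝ) (μ : ℕ → ℕ → ℝ) (n : ℕ) :
    symplecticMoment A μ n 0 = 0 := by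
  simp [symplecticMoment]

theorem symplecticMoment_succ_sub {A : ℕ → ℕ → ℕ → ℝ} {μ : ℕ → ℕ → ℝ} (n k : ℕ)
    (hμ : μ k k = 1) :
    symplecticMoment A μ n (k + 1) - symplecticMoment A μ n k =
      (A n (2 * k + 1) (2 * k + 1) - (∑ j ∈ range (k + 1), μ (k + 1) j * A n (2 * (k + 1)) (2 * j)
        - ∑ j ∈ range (k + 1), μ k j * A n (2 * k) (2 * j))) / 2 := by
  have hdiag : ∑ i ∈ range (2 * (k + 1)), A n i i =
      ∑ i ∈ range (2 * k), A n i i + A n (2 * k) (2 * k) + A n (2 * k + 1) (2 * k + 1) := by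
    rw [show 2 * (k + 1) = 2 * k + 1 + 1 by ring, sum_range_succ, sum_range_succ]
  rw [symplecticMoment, symplecticMoment, hdiag, sum_range_succ (fun j => μ k j * _), hμ]
  ring

section SkewOrthogonal

variable {S : ℝ[X] →ₗ[ℝ] ℝ[X] →ₗ[ℝ] ℂ} {p q : ℕ → ℝ[X]} {lam : ℕ → ℝ} {μ : ℕ → ℕ → ℝ}
  {r : ℕ → ℝ} {A : ℕ → ℕ → ℕ → ℝ}
  (hμ : ∀ k j, μ k j = ∏ l ∈ Ico j k, lam l)
  (hqodd : ∀ k, q (2 * k + 1) = p (2 * k + 1))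
  (hqeven : ∀ k, q (2 * k) = ∑ j ∈ range (k + 1), C (μ k j) * p (2 * j))
  (hskew_ee : ∀ j k, S (q (2 * j)) (q (2 * k)) = 0)
  (hskew_oo : ∀ j k, S (q (2 * j + 1)) (q (2 * k + 1)) = 0)
  (hskew_oe : ∀ j k, S (q (2 * j + 1)) (q (2 * k)) = if j = k then (r k : ℂ) else 0)
  (hA : ∀ n k, X ^ n * p k = ∑ j ∈ range (k + n + 1), C (A n j k) * p j)
  (hA0 : ∀ n j k, k + n < j → A n j k = 0)

include hμ hqeven in
theorem p_zero_eq_q_zero : p 0 = q 0 := by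
  simpa [hμ] using (hqeven 0).symm

include hμ hqeven in
theorem p_two_mul_succ_eq (k : ℕ) : p (2 * (k + 1)) = q (2 * (k + 1)) - lam k • q (2 * k) := by
  have hq : q (2 * (k + 1)) = lam k • q (2 * k) + p (2 * (k + 1)) := by
    rw [hqeven, hqeven, sum_range_succ, smul_sum, hμ (k + 1) (k + 1), Ico_self, prod_empty, C_1,
      one_mul]
    congr 1
    refine sum_congr rfl fun j hj => ?_
    rw [hμ, hμ, prod_Ico_succ_top (Nat.lt_succ_iff.mp (mem_range.mp hj)), C_mul', C_mul',
      smul_smul, mul_comm]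
  rw [hq, add_sub_cancel_left]

include hμ hqodd hqeven hskew_ee hskew_oe in
theorem skew_p_q_even (i k : ℕ) :
    S (p i) (q (2 * k)) = if i = 2 * k + 1 then (r k : ℂ) else 0 := by
  obtain ⟨m, rfl | rfl⟩ := Nat.even_or_odd' i
  · rw [if_neg (by omega)]
    rcases m with _ | m
    · simpa [p_zero_eq_q_zero hμ hqeven] using hskew_ee 0 k
    · rw [p_two_mul_succ_eq hμ hqeven, map_sub, map_smul, LinearMap.sub_apply,
        LinearMap.smul_apply, hskew_ee, hskew_ee, smul_zero, sub_zero]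
  · rw [← hqodd, hskew_oe]
    simp

include hμ hqodd hqeven hskew_oo hskew_oe in
theorem skew_p_q_odd (hS : S.IsAlt) (i k : ℕ) :
    S (p i) (q (2 * k + 1)) =
      if i = 2 * k then -(r k : ℂ) else if i = 2 * k + 2 then (lam k * r k : ℝ) else 0 := by
  obtain ⟨m, rfl | rfl⟩ := Nat.even_or_odd' i
  · have hqq (j : ℕ) : S (q (2 * j)) (q (2 * k + 1)) = if j = k then -(r k : ℂ) else 0 := by
      rw [← hS.neg, hskew_oe]
      split_ifs <;> simp_all
    rcases m with _ | m
    · simpa [p_zero_eq_q_zero hμ hqeven, eq_comm] using hqq 0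
    · rw [p_two_mul_succ_eq hμ hqeven, map_sub, map_smul, LinearMap.sub_apply,
        LinearMap.smul_apply, hqq, hqq]
      split_ifs <;> subst_vars <;> first | omega | simp [Complex.real_smul]
  · rw [← hqodd, hskew_oo, if_neg (by omega), if_neg (by omega)]

include hμ hqodd hqeven hskew_ee hskew_oe hA hA0 in
theorem skew_X_pow_mul_q_odd (n k : ℕ) :
    S (X ^ n * q (2 * k + 1)) (q (2 * k)) = (A n (2 * k + 1) (2 * k + 1) * r k : ℝ) := by
  have h := map_X_pow_mul_eq_sum (S.flip (q (2 * k))) hA hA0 (s := {2 * k + 1})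
    (fun i hi => by
      rw [mem_singleton] at hi
      simp [skew_p_q_even hμ hqodd hqeven hskew_ee hskew_oe, hi]) n (2 * k + 1)
  simpa [hqodd, skew_p_q_even hμ hqodd hqeven hskew_ee hskew_oe, Complex.real_smul] using h

include hμ hqodd hqeven hskew_oo hskew_oe hA hA0 in
theorem skew_X_pow_mul_p_even_q_odd (hS : S.IsAlt) (n j k : ℕ) :
    S (X ^ n * p (2 * j)) (q (2 * k + 1)) =
      (r k * (lam k * A n (2 * (k + 1)) (2 * j) - A n (2 * k) (2 * j)) : ℝ) := by
  have hskew := skew_p_q_odd hμ hqodd hqeven hskew_oo hskew_oe hS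
  have h := map_X_pow_mul_eq_sum (S.flip (q (2 * k + 1))) hA hA0 (s := {2 * k, 2 * k + 2})
    (fun i hi => by simp only [mem_insert, mem_singleton, not_or] at hi; simp [hskew, hi]) n (2 * j)
  rw [sum_pair (by omega)] at h
  simp only [LinearMap.flip_apply, hskew, if_pos, if_neg (show 2 * k + 2 ≠ 2 * k by omega),
    Complex.real_smul] at h
  rw [h, show 2 * (k + 1) = 2 * k + 2 by ring]
  push_cast
  ring

include hμ hqodd hqeven hskew_oo hskew_oe hA hA0 in
theorem skew_X_pow_mul_q_even (hS : S.IsAlt) (n k : ℕ) :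
    S (X ^ n * q (2 * k)) (q (2 * k + 1)) =
      (r k * (∑ j ∈ range (k + 1), μ (k + 1) j * A n (2 * (k + 1)) (2 * j)
        - ∑ j ∈ range (k + 1), μ k j * A n (2 * k) (2 * j)) : ℝ) := by
  have hterm (j : ℕ) : S (X ^ n * (C (μ k j) * p (2 * j))) (q (2 * k + 1)) =
      (μ k j * (r k * (lam k * A n (2 * (k + 1)) (2 * j) - A n (2 * k) (2 * j))) : ℝ) := by
    rw [mul_left_comm, C_mul', map_smul, LinearMap.smul_apply,
      skew_X_pow_mul_p_even_q_odd hμ hqodd hqeven hskew_oo hskew_oe hA hA0 hS, Complex.real_smul,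
      ← Complex.ofReal_mul]
  rw [hqeven k, mul_sum, map_sum, LinearMap.sum_apply, sum_congr rfl fun j _ => hterm j,
    ← Complex.ofReal_sum, mul_sub, mul_sum, mul_sum, ← sum_sub_distrib]
  congr 1
  refine sum_congr rfl fun j hj => ?_
  rw [hμ (k + 1), prod_Ico_succ_top (Nat.lt_succ_iff.mp (mem_range.mp hj)), ← hμ]
  ring

include hμ hqodd hqeven hskew_ee hskew_oo hskew_oe hA hA0 in
theorem inv_mul_skew_X_pow_mul_sub (hS : S.IsAlt) {k : ℕ} (hr : r k ≠ 0) (n : ℕ) :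
    (r k : ℂ)⁻¹ * ((S (X ^ n * q (2 * k + 1)) (q (2 * k))
      - S (X ^ n * q (2 * k)) (q (2 * k + 1))) / 2) =
      (symplecticMoment A μ n (k + 1) - symplecticMoment A μ n k : ℝ) := by
  rw [skew_X_pow_mul_q_odd hμ hqodd hqeven hskew_ee hskew_oe hA hA0,
    skew_X_pow_mul_q_even hμ hqodd hqeven hskew_oo hskew_oe hA hA0 hS,
    symplecticMoment_succ_sub n k (by simp [hμ])]
  have hr' : (r k : ℂ) ≠ 0 := Complex.ofReal_ne_zero.mpr hr
  push_cast
  field_simp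

end SkewOrthogonal

theorem holomorphic_spectral_moments_symplectic
    (ω : ℂ → ℝ)
    (hmom : ∀ m : ℕ, Integrable (fun z : ℂ => ‖z‖ ^ m * ω z))
    (p : ℕ → Polynomial ℝ)
    (hmonic : ∀ k, (p k).Monic) (hdeg : ∀ k, (p k).natDegree = k)
    (h : ℕ → ℝ)
    (horth : ∀ j k : ℕ,
      (1 / (Real.pi : ℂ)) * ∫ z : ℂ,
        (Polynomial.aeval z (p j)) * (starRingEnd ℂ) (Polynomial.aeval z (p k)) * (ω z : ℂ)
      = if j = k then (h k : ℂ) else 0)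
    (c : ℕ → ℝ)
    (A : ℕ → ℕ → ℕ → ℝ)
    (hA : ∀ q k : ℕ, (Polynomial.X : Polynomial ℝ) ^ q * p k
      = ∑ j ∈ Finset.range (k + q + 1), Polynomial.C (A q j k) * p j)
    (hA0 : ∀ q j k : ℕ, k + q < j → A q j k = 0)
    (hden : ∀ l : ℕ, h (2 * l + 1) - c (2 * l + 1) * h (2 * l) ≠ 0)
    (lam : ℕ → ℝ)
    (μ : ℕ → ℕ → ℝ) (hμ : ∀ k j : ℕ, μ k j = ∏ l ∈ Finset.Ico j k, lam l)
    (r : ℕ → ℝ) (hr : ∀ k : ℕ, r k = 2 * (h (2 * k + 1) - c (2 * k + 1) * h (2 * k)))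
    (q : ℕ → Polynomial ℝ)
    (hqodd : ∀ k : ℕ, q (2 * k + 1) = p (2 * k + 1))
    (hqeven : ∀ k : ℕ, q (2 * k) = ∑ j ∈ Finset.range (k + 1), Polynomial.C (μ k j) * p (2 * j))
    (hskew_ee : ∀ j k : ℕ, skewProd ω (q (2 * j)) (q (2 * k)) = 0)
    (hskew_oo : ∀ j k : ℕ, skewProd ω (q (2 * j + 1)) (q (2 * k + 1)) = 0)
    (hskew_oe : ∀ j k : ℕ, skewProd ω (q (2 * j + 1)) (q (2 * k))
      = if j = k then (r k : ℂ) else 0)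
    (N : ℕ) (pp : ℕ) :
    (1 / (Real.pi : ℂ)) * ∫ z : ℂ,
        z ^ pp * ((starRingEnd ℂ) z - z) *
          (∑ k ∈ Finset.range N,
            (Polynomial.aeval z (q (2 * k + 1)) * Polynomial.aeval ((starRingEnd ℂ) z) (q (2 * k))
              - Polynomial.aeval z (q (2 * k)) *
                  Polynomial.aeval ((starRingEnd ℂ) z) (q (2 * k + 1))) / (r k : ℂ)) *
          (ω z : ℂ)
      = (((1 : ℝ) / 2 * ∑ k ∈ Finset.range (2 * N), A pp k k
          - 1 / 2 * ∑ j ∈ Finset.range N, μ N j * A pp (2 * N) (2 * j) : ℝ) : ℂ) := by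
  have hsymm : (planarPairing hmom).flip = planarPairing hmom :=
    LinearMap.flip_eq_self_of_span_range (span_range_eq_top_of_monic hmonic hdeg) fun j k => by
      simp only [planarPairing_eq_integral_mul_conj, horth]
      split_ifs <;> simp_all
  have hterm (k : ℕ) : (1 / (Real.pi : ℂ)) * ∫ z, (r k : ℂ)⁻¹ *
      skewMomentIntegrand ω pp (q (2 * k + 1)) (q (2 * k)) z =
        (symplecticMoment A μ pp (k + 1) - symplecticMoment A μ pp k : ℝ) := by
    rw [integral_const_mul, mul_left_comm,
      integral_skewMomentIntegrand hmom fun f g => LinearMap.congr_fun₂ hsymm g f]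
    exact inv_mul_skew_X_pow_mul_sub (S := skewForm hmom) hμ hqodd hqeven hskew_ee hskew_oo
      hskew_oe hA hA0 (skewForm_isAlt hmom) (by rw [hr]; exact mul_ne_zero two_ne_zero (hden k)) pp
  calc _ = ∑ k ∈ range N, (1 / (Real.pi : ℂ)) * ∫ z, (r k : ℂ)⁻¹ *
        skewMomentIntegrand ω pp (q (2 * k + 1)) (q (2 * k)) z := by
        rw [← mul_sum, ← integral_finsetSum _ fun k _ =>
          (integrable_skewMomentIntegrand hmom _ _ _).const_mul _]
        congr 2 with z
        simp only [skewMomentIntegrand, mul_sum, sum_mul, div_eq_inv_mul]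
        exact sum_congr rfl fun k _ => by ring
    _ = ∑ k ∈ range N, ((symplecticMoment A μ pp (k + 1) - symplecticMoment A μ pp k : ℝ) : ℂ) :=
        sum_congr rfl fun k _ => hterm k
    _ = _ := by
        rw [← Complex.ofReal_sum, sum_range_sub, symplecticMoment_zero, sub_zero, symplecticMoment]
        congr 1
        ring
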